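/- Let n be a 3-step nilpotent Lie algebra with inner product, C(n) its commutator ideal, v = C(n)^⊥, and S : n → n a symmetric linear map. Then ⟨Y, [SY, Y]⟩ = 0 for all Y ∈ n if and only if: (i) [SX, Y] = [X, SY] for all X,Y ∈ v; (ii) for each X ∈ v, the map U ↦ [X, SU] - [SX, U] is skew-symmetric on C(n), i.e. ⟨[X,SU₁] - [SX,U₁], U₂⟩ + ⟨[X,SU₂] - [SX,U₂], U₁⟩ = 0 for all U₁,U₂ ∈ C(n); and (iii) ⟨U, [SU, U]⟩ = 0 for all U ∈ C(n). -/

import Mathlib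

/-!
Write `Y = X + U` with `X ∈ v` and `U ∈ C(n)`. Since every bracket lies in `C(n) ⟂ v`, the
function `Y ↦ ⟨Y, [SY, Y]⟩` becomes `⟨U, [SX, X]⟩ + (⟨U, [SX, U]⟩ + ⟨U, [SU, X]⟩) + ⟨U, [SU, U]⟩`,
a sum of parts homogeneous of degrees 1, 2 and 3 in `U`. It vanishes identically iff each part
does: comparing `U` with `-U` separates the odd and even parts. Taking `U = [SX, X]` in the
degree-1 part gives `[SX, X] = 0` on `v`, which polarizes to (i); the degree-2 part polarizes
to (ii); the degree-3 part is (iii).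
-/

/-- The commutator ideal of a Lie algebra, as the span of all brackets. -/
def commIdeal (n : Type*) [LieRing n] [LieAlgebra ℝ n] : Submodule ℝ n :=
  Submodule.span ℝ {z : n | ∃ a b : n, ⁅a, b⁆ = z}

/-- Membership in `v = C(n)ᗮ`, the orthogonal complement of the commutator
ideal with respect to the inner product `ip`. -/
def InCommPerp {n : Type*} [LieRing n] [LieAlgebra ℝ n]
    (ip : n →ₗ[ℝ] n →ₗ[ℝ] ℝ) (X : n) : Prop :=
  ∀ U ∈ commIdeal n, ip X U = 0

theorem lie_apply_eq_of_lie_apply_self_eq_zero {R L : Type*} [CommRing R] [LieRing L]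
    [LieAlgebra R L] (S : L →ₗ[R] L) {X Y : L} (hX : ⁅S X, X⁆ = 0)
    (hY : ⁅S Y, Y⁆ = 0) (hXY : ⁅S (X + Y), X + Y⁆ = 0) : ⁅S X, Y⁆ = ⁅X, S Y⁆ := by
  rw [map_add, add_lie, lie_add, lie_add, hX, hY, zero_add, add_zero] at hXY
  rw [← lie_skew X (S Y)]
  exact eq_neg_of_add_eq_zero_left hXY

theorem lie_apply_self_eq_zero_of_lie_apply_eq {K L : Type*} [Field K] [CharZero K] [LieRing L]
    [LieAlgebra K L] (S : L →ₗ[K] L) {X : L} (h : ⁅S X, X⁆ = ⁅X, S X⁆) : ⁅S X, X⁆ = 0 := by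
  rw [← lie_skew X (S X), eq_neg_iff_add_eq_zero, ← two_smul K] at h
  exact (smul_eq_zero.1 h).resolve_left two_ne_zero

section Form

variable {L : Type*} [LieRing L] [LieAlgebra ℝ L] {B : L →ₗ[ℝ] L →ₗ[ℝ] ℝ} (S : L →ₗ[ℝ] L)

theorem lie_mem_commIdeal (a b : L) : ⁅a, b⁆ ∈ commIdeal L :=
  Submodule.subset_span ⟨a, b, rfl⟩

theorem InCommPerp.apply_lie_eq_zero {X : L} (hX : InCommPerp B X) (a b : L) :
    B X ⁅a, b⁆ = 0 :=
  hX _ (lie_mem_commIdeal a b)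

theorem InCommPerp.add {X Y : L} (hX : InCommPerp B X) (hY : InCommPerp B Y) :
    InCommPerp B (X + Y) := fun U hU => by
  rw [map_add, LinearMap.add_apply, hX U hU, hY U hU, add_zero]

theorem InCommPerp.apply_add_lie_apply_add {X : L} (hX : InCommPerp B X) (U : L) :
    B (X + U) ⁅S (X + U), X + U⁆ =
      B U ⁅S X, X⁆ + (B U ⁅S X, U⁆ + B U ⁅S U, X⁆) + B U ⁅S U, U⁆ := by
  simp only [map_add, lie_add, add_lie, LinearMap.add_apply, hX.apply_lie_eq_zero]
  ring

theorem InCommPerp.homogeneous_parts_eq_zero (hf : ∀ Y, B Y ⁅S Y, Y⁆ = 0) {X : L}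
    (hX : InCommPerp B X) (U : L) :
    B U ⁅S X, X⁆ = 0 ∧ B U ⁅S X, U⁆ + B U ⁅S U, X⁆ = 0 := by
  have hplus := hX.apply_add_lie_apply_add S U
  have hminus := hX.apply_add_lie_apply_add S (-U)
  simp only [map_neg, lie_neg, neg_lie, neg_neg, LinearMap.neg_apply] at hminus
  rw [hf] at hplus hminus
  have hcubic := hf U
  constructor <;> linarith

theorem eq_zero_of_apply_self_eq_zero (hB : ∀ x : L, x ≠ 0 → 0 < B x x) {x : L}
    (hx : B x x = 0) : x = 0 := by
  by_contra h
  exact (hB x h).ne' hx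

theorem InCommPerp.lie_apply_self_eq_zero (hB : ∀ x : L, x ≠ 0 → 0 < B x x)
    (hf : ∀ Y, B Y ⁅S Y, Y⁆ = 0) {X : L} (hX : InCommPerp B X) : ⁅S X, X⁆ = 0 :=
  eq_zero_of_apply_self_eq_zero hB (hX.homogeneous_parts_eq_zero S hf _).1

theorem apply_lie_apply_sub_lie (hB : ∀ x y : L, B x y = B y x) (X U₁ U₂ : L) :
    B (⁅X, S U₁⁆ - ⁅S X, U₁⁆) U₂ = -(B U₂ ⁅S X, U₁⁆ + B U₂ ⁅S U₁, X⁆) := by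
  rw [hB, map_sub, ← lie_skew X (S U₁), map_neg]
  ring

theorem InCommPerp.apply_lie_sub_add_apply_lie_sub_eq_zero (hB : ∀ x y : L, B x y = B y x)
    (hf : ∀ Y, B Y ⁅S Y, Y⁆ = 0) {X : L} (hX : InCommPerp B X) (U₁ U₂ : L) :
    B (⁅X, S U₁⁆ - ⁅S X, U₁⁆) U₂ + B (⁅X, S U₂⁆ - ⁅S X, U₂⁆) U₁ = 0 := by
  have h₁ := (hX.homogeneous_parts_eq_zero S hf U₁).2
  have h₂ := (hX.homogeneous_parts_eq_zero S hf U₂).2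
  have h₁₂ := (hX.homogeneous_parts_eq_zero S hf (U₁ + U₂)).2
  simp only [map_add, lie_add, add_lie, LinearMap.add_apply] at h₁₂
  rw [apply_lie_apply_sub_lie S hB, apply_lie_apply_sub_lie S hB]
  linarith

theorem exists_inCommPerp_add [FiniteDimensional ℝ L] (hB : ∀ x y : L, B x y = B y x)
    (hpos : ∀ x : L, x ≠ 0 → 0 < B x x) (Y : L) :
    ∃ X U, InCommPerp B X ∧ U ∈ commIdeal L ∧ Y = X + U := by
  have hnd : (LinearMap.BilinForm.restrict B (commIdeal L)).Nondegenerate :=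
    ⟨fun x hx => Subtype.ext (eq_zero_of_apply_self_eq_zero hpos (hx x)),
      fun x hx => Subtype.ext (eq_zero_of_apply_self_eq_zero hpos (hx x))⟩
  have hcompl := LinearMap.BilinForm.isCompl_orthogonal_of_restrict_nondegenerate
    (fun x y h => (hB y x).trans h) hnd
  obtain ⟨U, hU, X, hX, rfl⟩ :=
    Submodule.mem_sup.1 (hcompl.sup_eq_top ▸ Submodule.mem_top (x := Y))
  exact ⟨X, U, fun W hW => (hB X W).trans (hX W hW), hU, add_comm U X⟩

end Form

theorem three_step_quadratic_first_integral_iff_general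
    {n : Type*} [LieRing n] [LieAlgebra ℝ n] [FiniteDimensional ℝ n]
    (ip : n →ₗ[ℝ] n →ₗ[ℝ] ℝ)
    (ip_symm : ∀ x y : n, ip x y = ip y x)
    (ip_pos : ∀ x : n, x ≠ 0 → 0 < ip x x)
    (S : n →ₗ[ℝ] n) :
    (∀ Y : n, ip Y ⁅S Y, Y⁆ = 0) ↔
      ((∀ X Y : n, InCommPerp ip X → InCommPerp ip Y →
          ⁅S X, Y⁆ = ⁅X, S Y⁆) ∧
       (∀ X : n, InCommPerp ip X →
          ∀ U₁ U₂ : n, U₁ ∈ commIdeal n → U₂ ∈ commIdeal n →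
            ip (⁅X, S U₁⁆ - ⁅S X, U₁⁆) U₂ + ip (⁅X, S U₂⁆ - ⁅S X, U₂⁆) U₁ = 0) ∧
       (∀ U ∈ commIdeal n, ip U ⁅S U, U⁆ = 0)) := by
  constructor
  · intro hf
    refine ⟨fun X Y hX hY => ?_, fun X hX U₁ U₂ _ _ =>
      hX.apply_lie_sub_add_apply_lie_sub_eq_zero S ip_symm hf U₁ U₂, fun U _ => hf U⟩
    exact lie_apply_eq_of_lie_apply_self_eq_zero S (hX.lie_apply_self_eq_zero S ip_pos hf)
      (hY.lie_apply_self_eq_zero S ip_pos hf) ((hX.add hY).lie_apply_self_eq_zero S ip_pos hf)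
  · rintro ⟨hv, hskew, hC⟩ Y
    obtain ⟨X, U, hX, hU, rfl⟩ := exists_inCommPerp_add ip_symm ip_pos Y
    have hlinear : ⁅S X, X⁆ = 0 := lie_apply_self_eq_zero_of_lie_apply_eq S (hv X X hX hX)
    have hquadratic := hskew X hX U U hU hU
    rw [apply_lie_apply_sub_lie S ip_symm] at hquadratic
    rw [hX.apply_add_lie_apply_add, hlinear, hC U hU, map_zero]
    linarith

/-- In a 3-step nilpotent metric Lie algebra with `n = v ⊕ C(n)`,
a symmetric map `S` satisfies `⟨Y,[SY,Y]⟩ = 0` for all `Y` iff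
(i) `[SX,Y] = [X,SY]` on `v`, (ii) `U ↦ [X,SU] - [SX,U]` is skew-symmetric on
`C(n)` for every `X ∈ v`, and (iii) `⟨U,[SU,U]⟩ = 0` for all `U ∈ C(n)`. -/
theorem three_step_quadratic_first_integral_iff
    {n : Type*} [LieRing n] [LieAlgebra ℝ n] [FiniteDimensional ℝ n]
    (h3 : ∀ X U V W : n, ⁅X, ⁅U, ⁅V, W⁆⁆⁆ = 0)
    (ip : n →ₗ[ℝ] n →ₗ[ℝ] ℝ)
    (ip_symm : ∀ x y : n, ip x y = ip y x)
    (ip_pos : ∀ x : n, x ≠ 0 → 0 < ip x x)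
    (S : n →ₗ[ℝ] n)
    (hSsym : ∀ x y : n, ip (S x) y = ip x (S y)) :
    (∀ Y : n, ip Y ⁅S Y, Y⁆ = 0) ↔
      ((∀ X Y : n, InCommPerp ip X → InCommPerp ip Y →
          ⁅S X, Y⁆ = ⁅X, S Y⁆) ∧
       (∀ X : n, InCommPerp ip X →
          ∀ U₁ U₂ : n, U₁ ∈ commIdeal n → U₂ ∈ commIdeal n →
            ip (⁅X, S U₁⁆ - ⁅S X, U₁⁆) U₂ + ip (⁅X, S U₂⁆ - ⁅S X, U₂⁆) U₁ = 0) ∧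
       (∀ U ∈ commIdeal n, ip U ⁅S U, U⁆ = 0)) :=
  three_step_quadratic_first_integral_iff_general ip ip_symm ip_pos S
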